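/- Assume B² is dense in B. If D : A ⊕_φ B → (A ⊕_φ B)* is a continuous derivation, written componentwise as D(a,b) = (D₁(a) + D₂(b), D₃(a) + D₄(b)) with D₁ : A → A*, D₂ : B → A*, D₃ : A → B*, D₄ : B → B*, then D₃ = 0, D₁ is a derivation on A, D₄ is a derivation on B, a·D₂(b) = D₂(b)·a = φ(a)D₂(b) for all a ∈ A, b ∈ B, and D₂(bb') = ⟨b, D₄(b')⟩φ + ⟨b', D₄(b)⟩φ for all b, b' ∈ B. -/

import Mathlib

/-!
Pairing the derivation identity against `(c, d)` and setting suitable arguments among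
`a, a', b, b', c, d` to zero isolates one component of `D` at a time. For `D₃` this only shows
that each `D₃ a` vanishes on products `b d`; since `D₃ a` is continuous and the span of `B²` is
dense, `D₃ a = 0`. With `D₃ = 0`, the remaining identities follow in the same way.
-/

open NormedSpace

/-- The multiplication of the `φ`-Lau product `A ⊕_φ B`. -/
noncomputable def lauMul {A B : Type*} [NonUnitalNormedRing A] [NormedSpace ℂ A]
    [NonUnitalNormedRing B] [NormedSpace ℂ B] (φ : A →L[ℂ] ℂ)
    (x y : A × B) : A × B :=
  (x.1 * y.1, φ x.1 • y.2 + φ y.1 • x.2 + x.2 * y.2)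

/-- `D : A ⊕_φ B → (A ⊕_φ B)* ≅ A* × B*` is a derivation for the dual actions
`(a,b)·(f,g) = (a·f + g(b)φ, φ(a)g + b·g)` and `(f,g)·(a,b) = (f·a + g(b)φ, φ(a)g + g·b)`,
stated by pairing against an arbitrary `(c,d)`. -/
def IsDerLau {A B : Type*} [NonUnitalNormedRing A] [NormedSpace ℂ A]
    [NonUnitalNormedRing B] [NormedSpace ℂ B] (φ : A →L[ℂ] ℂ)
    (D : (A × B) →L[ℂ] (StrongDual ℂ A × StrongDual ℂ B)) : Prop :=
  ∀ (a a' : A) (b b' : B) (c : A) (d : B),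
    (D (lauMul φ (a, b) (a', b'))).1 c + (D (lauMul φ (a, b) (a', b'))).2 d
      = ((D (a', b')).1 (c * a) + (D (a', b')).2 b * φ c
          + φ a * (D (a', b')).2 d + (D (a', b')).2 (d * b))
        + ((D (a, b)).1 (a' * c) + (D (a, b)).2 b' * φ c
          + φ a' * (D (a, b)).2 d + (D (a, b)).2 (b' * d))

theorem ContinuousLinearMap.eq_zero_of_map_mul_eq_zero {R B F : Type*} [Semiring R]
    [NonUnitalNonAssocSemiring B] [TopologicalSpace B] [Module R B]
    [AddCommMonoid F] [TopologicalSpace F] [T2Space F] [Module R F]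
    (hB2 : Dense (Submodule.span R {x : B | ∃ b b' : B, x = b * b'} : Set B))
    (f : B →L[R] F) (hf : ∀ b b' : B, f (b * b') = 0) : f = 0 :=
  ContinuousLinearMap.ext_on hB2 fun _ ⟨b, b', hx⟩ ↦ by rw [hx, hf, zero_apply]

def IsLauDecomposition {A B : Type*} [NonUnitalNormedRing A] [NormedSpace ℂ A]
    [NonUnitalNormedRing B] [NormedSpace ℂ B]
    (D : (A × B) →L[ℂ] (StrongDual ℂ A × StrongDual ℂ B))
    (D₁ : A →L[ℂ] StrongDual ℂ A) (D₂ : B →L[ℂ] StrongDual ℂ A)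
    (D₃ : A →L[ℂ] StrongDual ℂ B) (D₄ : B →L[ℂ] StrongDual ℂ B) : Prop :=
  ∀ (a : A) (b : B), D (a, b) = (D₁ a + D₂ b, D₃ a + D₄ b)

namespace IsDerLau

variable {A B : Type*} [NonUnitalNormedRing A] [NormedSpace ℂ A]
  [NonUnitalNormedRing B] [NormedSpace ℂ B] {φ : A →L[ℂ] ℂ}
  {D : (A × B) →L[ℂ] (StrongDual ℂ A × StrongDual ℂ B)}
  {D₁ : A →L[ℂ] StrongDual ℂ A} {D₂ : B →L[ℂ] StrongDual ℂ A}
  {D₃ : A →L[ℂ] StrongDual ℂ B} {D₄ : B →L[ℂ] StrongDual ℂ B}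

theorem componentwise (hD : IsDerLau φ D) (hdec : IsLauDecomposition D D₁ D₂ D₃ D₄)
    (a a' : A) (b b' : B) (c : A) (d : B) :
    D₁ (a * a') c + (φ a * D₂ b' c + φ a' * D₂ b c + D₂ (b * b') c) +
        (D₃ (a * a') d + (φ a * D₄ b' d + φ a' * D₄ b d + D₄ (b * b') d)) =
      D₁ a' (c * a) + D₂ b' (c * a) + (D₃ a' b + D₄ b' b) * φ c + φ a * (D₃ a' d + D₄ b' d) +
          (D₃ a' (d * b) + D₄ b' (d * b)) +
        (D₁ a (a' * c) + D₂ b (a' * c) + (D₃ a b' + D₄ b b') * φ c + φ a' * (D₃ a d + D₄ b d) +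
          (D₃ a (b' * d) + D₄ b (b' * d))) := by
  unfold IsLauDecomposition at hdec
  simpa [lauMul, hdec] using hD a a' b b' c d

theorem D₃_apply_mul (hD : IsDerLau φ D) (hdec : IsLauDecomposition D D₁ D₂ D₃ D₄)
    (a : A) (b d : B) : D₃ a (b * d) = 0 := by
  have h := hD.componentwise hdec a 0 0 b 0 d
  simp only [map_zero, zero_apply, mul_zero, zero_mul, add_zero, zero_add] at h
  linear_combination -h

theorem D₃_eq_zero (hD : IsDerLau φ D) (hdec : IsLauDecomposition D D₁ D₂ D₃ D₄)
    (hB2 : Dense (Submodule.span ℂ {x : B | ∃ b b' : B, x = b * b'} : Set B)) : D₃ = 0 := by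
  ext1 a
  exact (D₃ a).eq_zero_of_map_mul_eq_zero hB2 (hD.D₃_apply_mul hdec a)

theorem D₁_apply_mul (hD : IsDerLau φ D) (hdec : IsLauDecomposition D D₁ D₂ D₃ D₄)
    (a a' c : A) : D₁ (a * a') c = D₁ a' (c * a) + D₁ a (a' * c) := by
  have h := hD.componentwise hdec a a' 0 0 c 0
  simp only [map_zero, zero_apply, mul_zero, zero_mul, add_zero] at h
  linear_combination h

theorem D₄_apply_mul (hD : IsDerLau φ D) (hdec : IsLauDecomposition D D₁ D₂ D₃ D₄)
    (b b' d : B) : D₄ (b * b') d = D₄ b' (d * b) + D₄ b (b' * d) := by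
  have h := hD.componentwise hdec 0 0 b b' 0 d
  simp only [map_zero, zero_apply, mul_zero, zero_mul, add_zero, zero_add] at h
  linear_combination h

theorem D₂_apply_mul_left (hD : IsDerLau φ D) (hdec : IsLauDecomposition D D₁ D₂ D₃ D₄)
    (hD₃ : D₃ = 0) (a : A) (b : B) (c : A) : D₂ b (c * a) = φ a * D₂ b c := by
  have h := hD.componentwise hdec a 0 0 b c 0
  simp only [hD₃, map_zero, zero_apply, mul_zero, zero_mul, add_zero, zero_add] at h
  linear_combination -h

theorem D₂_apply_mul_right (hD : IsDerLau φ D) (hdec : IsLauDecomposition D D₁ D₂ D₃ D₄)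
    (hD₃ : D₃ = 0) (a : A) (b : B) (c : A) : D₂ b (a * c) = φ a * D₂ b c := by
  have h := hD.componentwise hdec 0 a b 0 c 0
  simp only [hD₃, map_zero, zero_apply, mul_zero, zero_mul, add_zero, zero_add] at h
  linear_combination -h

theorem D₂_mul (hD : IsDerLau φ D) (hdec : IsLauDecomposition D D₁ D₂ D₃ D₄) (b b' : B) :
    D₂ (b * b') = D₄ b' b • (φ : StrongDual ℂ A) + D₄ b b' • (φ : StrongDual ℂ A) := by
  ext c
  have h := hD.componentwise hdec 0 0 b b' c 0
  simp only [map_zero, zero_apply, mul_zero, zero_mul, add_zero, zero_add] at h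
  simp only [add_apply, smul_apply, smul_eq_mul]
  linear_combination h

end IsDerLau

theorem lau_derivation_decomposition_general {A B : Type*} [NonUnitalNormedRing A] [NormedSpace ℂ A]
    [NonUnitalNormedRing B] [NormedSpace ℂ B]
    (φ : A →L[ℂ] ℂ)
    (hB2 : closure ((Submodule.span ℂ {x : B | ∃ b b' : B, x = b * b'} :
      Submodule ℂ B) : Set B) = Set.univ)
    (D : (A × B) →L[ℂ] (StrongDual ℂ A × StrongDual ℂ B)) (hD : IsDerLau φ D)
    (D₁ : A →L[ℂ] StrongDual ℂ A) (D₂ : B →L[ℂ] StrongDual ℂ A)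
    (D₃ : A →L[ℂ] StrongDual ℂ B) (D₄ : B →L[ℂ] StrongDual ℂ B)
    (hdec : ∀ (a : A) (b : B), D (a, b) = (D₁ a + D₂ b, D₃ a + D₄ b)) :
    D₃ = 0 ∧
    (∀ a a' c : A, D₁ (a * a') c = D₁ a' (c * a) + D₁ a (a' * c)) ∧
    (∀ b b' d : B, D₄ (b * b') d = D₄ b' (d * b) + D₄ b (b' * d)) ∧
    (∀ (a : A) (b : B) (c : A),
      D₂ b (c * a) = φ a * D₂ b c ∧ D₂ b (a * c) = φ a * D₂ b c) ∧
    (∀ b b' : B, D₂ (b * b') = D₄ b' b • (φ : StrongDual ℂ A) + D₄ b b' • (φ : StrongDual ℂ A)) := by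
  have hD₃ := hD.D₃_eq_zero hdec (dense_iff_closure_eq.mpr hB2)
  exact ⟨hD₃, hD.D₁_apply_mul hdec, hD.D₄_apply_mul hdec,
    fun a b c ↦ ⟨hD.D₂_apply_mul_left hdec hD₃ a b c, hD.D₂_apply_mul_right hdec hD₃ a b c⟩,
    hD.D₂_mul hdec⟩

/-- If `B²` is dense in `B` and a continuous derivation `D : A ⊕_φ B → (A ⊕_φ B)*` is
written componentwise as `D(a,b) = (D₁(a) + D₂(b), D₃(a) + D₄(b))`, then `D₃ = 0`, `D₁` is
a derivation on `A`, `D₄` is a derivation on `B`, `a·D₂(b) = D₂(b)·a = φ(a)D₂(b)` and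
`D₂(bb') = ⟨b, D₄(b')⟩φ + ⟨b', D₄(b)⟩φ`. -/
theorem lau_derivation_decomposition {A B : Type*} [NonUnitalNormedRing A] [NormedSpace ℂ A]
    [IsScalarTower ℂ A A] [SMulCommClass ℂ A A] [CompleteSpace A]
    [NonUnitalNormedRing B] [NormedSpace ℂ B]
    [IsScalarTower ℂ B B] [SMulCommClass ℂ B B] [CompleteSpace B]
    (φ : A →L[ℂ] ℂ) (hφmul : ∀ a a' : A, φ (a * a') = φ a * φ a') (hφne : φ ≠ 0)
    (hB2 : closure ((Submodule.span ℂ {x : B | ∃ b b' : B, x = b * b'} :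
      Submodule ℂ B) : Set B) = Set.univ)
    (D : (A × B) →L[ℂ] (StrongDual ℂ A × StrongDual ℂ B)) (hD : IsDerLau φ D)
    (D₁ : A →L[ℂ] StrongDual ℂ A) (D₂ : B →L[ℂ] StrongDual ℂ A)
    (D₃ : A →L[ℂ] StrongDual ℂ B) (D₄ : B →L[ℂ] StrongDual ℂ B)
    (hdec : ∀ (a : A) (b : B), D (a, b) = (D₁ a + D₂ b, D₃ a + D₄ b)) :
    D₃ = 0 ∧
    (∀ a a' c : A, D₁ (a * a') c = D₁ a' (c * a) + D₁ a (a' * c)) ∧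
    (∀ b b' d : B, D₄ (b * b') d = D₄ b' (d * b) + D₄ b (b' * d)) ∧
    (∀ (a : A) (b : B) (c : A),
      D₂ b (c * a) = φ a * D₂ b c ∧ D₂ b (a * c) = φ a * D₂ b c) ∧
    (∀ b b' : B, D₂ (b * b') = D₄ b' b • (φ : StrongDual ℂ A) + D₄ b b' • (φ : StrongDual ℂ A)) :=
  lau_derivation_decomposition_general φ hB2 D hD D₁ D₂ D₃ D₄ hdec
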